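/- For each of the Case 2.1 and Case 2.2 matched pairs of actions (⇀, ↼) on the Kac–Paljutkin algebra H_8, the associated Yang–Baxter operator r : H_8⊗H_8 → H_8⊗H_8, r(x⊗y) = (x₁ ⇀ y₁)⊗(x₂ ↼ y₂), is involutive: r∘r = id. -/

import Mathlib

open TensorProduct

noncomputable section

variable (k H : Type) [Field k] [Ring H] [HopfAlgebra k H]

/-- The map `x ⊗ y ↦ Σ (x₁ ⊗ y₁) ⊗ (x₂ ⊗ y₂)` (Sweedler notation). -/
def sweedler2 : H ⊗[k] H →ₗ[k] (H ⊗[k] H) ⊗[k] (H ⊗[k] H) :=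
  (TensorProduct.tensorTensorTensorComm k H H H H).toLinearMap ∘ₗ
    TensorProduct.map Coalgebra.comul Coalgebra.comul

variable {k H}

/-- `f : H ⊗ H →ₗ H`, written `f (x ⊗ₜ y) = x ⇀ y`, is a left `H`-module coalgebra
action of `H` on itself. -/
structure IsLeftModuleCoalgebraAction (f : H ⊗[k] H →ₗ[k] H) : Prop where
  /-- `x ⇀ (y ⇀ w) = (xy) ⇀ w` -/
  mul_act : f ∘ₗ TensorProduct.map LinearMap.id f ∘ₗ (TensorProduct.assoc k H H H).toLinearMap
    = f ∘ₗ TensorProduct.map (LinearMap.mul' k H) LinearMap.id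
  /-- `1 ⇀ y = y` -/
  one_act : ∀ y : H, f ((1 : H) ⊗ₜ[k] y) = y
  /-- `Δ(x ⇀ y) = (x₁ ⇀ y₁) ⊗ (x₂ ⇀ y₂)` -/
  comul_comp : Coalgebra.comul ∘ₗ f = TensorProduct.map f f ∘ₗ sweedler2 k H
  /-- `ε(x ⇀ y) = ε(x)ε(y)` -/
  counit_comp : Coalgebra.counit ∘ₗ f
    = (TensorProduct.lid k k).toLinearMap ∘ₗ
        TensorProduct.map Coalgebra.counit Coalgebra.counit

/-- `g : H ⊗ H →ₗ H`, written `g (x ⊗ₜ y) = x ↼ y`, is a right `H`-module coalgebra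
action of `H` on itself. -/
structure IsRightModuleCoalgebraAction (g : H ⊗[k] H →ₗ[k] H) : Prop where
  /-- `(x ↼ y) ↼ w = x ↼ (yw)` -/
  act_mul : g ∘ₗ TensorProduct.map g LinearMap.id
    = g ∘ₗ TensorProduct.map LinearMap.id (LinearMap.mul' k H) ∘ₗ
        (TensorProduct.assoc k H H H).toLinearMap
  /-- `x ↼ 1 = x` -/
  act_one : ∀ x : H, g (x ⊗ₜ[k] (1 : H)) = x
  /-- `Δ(x ↼ y) = (x₁ ↼ y₁) ⊗ (x₂ ↼ y₂)` -/
  comul_comp : Coalgebra.comul ∘ₗ g = TensorProduct.map g g ∘ₗ sweedler2 k H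
  /-- `ε(x ↼ y) = ε(x)ε(y)` -/
  counit_comp : Coalgebra.counit ∘ₗ g
    = (TensorProduct.lid k k).toLinearMap ∘ₗ
        TensorProduct.map Coalgebra.counit Coalgebra.counit

/-- `(f, g)` (written `f (x ⊗ₜ y) = x ⇀ y` and `g (x ⊗ₜ y) = x ↼ y`) is a matched pair
of actions on the Hopf algebra `H`. -/
structure IsMatchedPairOfActions (f g : H ⊗[k] H →ₗ[k] H) : Prop where
  left : IsLeftModuleCoalgebraAction f
  right : IsRightModuleCoalgebraAction g
  /-- `x ⇀ (ab) = (x₁ ⇀ a₁)((x₂ ↼ a₂) ⇀ b)` -/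
  mp1 : f ∘ₗ TensorProduct.map LinearMap.id (LinearMap.mul' k H) ∘ₗ
      (TensorProduct.assoc k H H H).toLinearMap
    = LinearMap.mul' k H ∘ₗ
        TensorProduct.map f (f ∘ₗ TensorProduct.map g LinearMap.id) ∘ₗ
        (TensorProduct.assoc k (H ⊗[k] H) (H ⊗[k] H) H).toLinearMap ∘ₗ
        TensorProduct.map (sweedler2 k H) LinearMap.id
  /-- `x ⇀ 1 = ε(x)1` -/
  mp2 : ∀ x : H, f (x ⊗ₜ[k] (1 : H)) = Coalgebra.counit (R := k) x • (1 : H)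
  /-- `(xy) ↼ a = (x ↼ (y₁ ⇀ a₁))(y₂ ↼ a₂)` -/
  mp3 : g ∘ₗ TensorProduct.map (LinearMap.mul' k H) LinearMap.id
    = LinearMap.mul' k H ∘ₗ
        TensorProduct.map (g ∘ₗ TensorProduct.map LinearMap.id f) g ∘ₗ
        (TensorProduct.assoc k H (H ⊗[k] H) (H ⊗[k] H)).symm.toLinearMap ∘ₗ
        TensorProduct.map LinearMap.id (sweedler2 k H) ∘ₗ
        (TensorProduct.assoc k H H H).toLinearMap
  /-- `1 ↼ a = ε(a)1` -/
  mp4 : ∀ a : H, g ((1 : H) ⊗ₜ[k] a) = Coalgebra.counit (R := k) a • (1 : H)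
  /-- `(x₁ ⇀ a₁) ⊗ (x₂ ↼ a₂) = (x₂ ⇀ a₂) ⊗ (x₁ ↼ a₁)` -/
  mp5 : TensorProduct.map f g ∘ₗ sweedler2 k H
    = TensorProduct.map f g ∘ₗ
        (TensorProduct.comm k (H ⊗[k] H) (H ⊗[k] H)).toLinearMap ∘ₗ sweedler2 k H
  /-- `xy = (x₁ ⇀ y₁)(x₂ ↼ y₂)` -/
  factor : LinearMap.mul' k H
    = LinearMap.mul' k H ∘ₗ TensorProduct.map f g ∘ₗ sweedler2 k H

variable (k H)

/-- The Yang–Baxter operator `r (x ⊗ₜ y) = (x₁ ⇀ y₁) ⊗ (x₂ ↼ y₂)` associated to a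
matched pair of actions. -/
def ybOp (f g : H ⊗[k] H →ₗ[k] H) : H ⊗[k] H →ₗ[k] H ⊗[k] H :=
  TensorProduct.map f g ∘ₗ sweedler2 k H

end
noncomputable section

/-! ### The Kac–Paljutkin algebra `H₈`, characterized by generators and relations.

A Hopf algebra `H` over `k` together with elements `g h z : H` and a basis
`b = (1, g, h, gh, z, gz, hz, ghz)` satisfying the defining relations of the
Kac–Paljutkin algebra.  Since the comultiplication, counit and antipode of a Hopf
algebra are (anti)algebra morphisms, these data determine the whole Hopf algebra
structure of `H₈`. -/
structure IsKacPaljutkin (k H : Type) [Field k] [Ring H] [HopfAlgebra k H]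
    (g h z : H) (b : Module.Basis (Fin 8) k H) : Prop where
  basis_eq : ⇑b = ![1, g, h, g * h, z, g * z, h * z, g * h * z]
  g_sq : g * g = 1
  h_sq : h * h = 1
  z_sq : z * z = (2 : k)⁻¹ • (1 + g + h - g * h)
  gh_comm : g * h = h * g
  zg : z * g = h * z
  zh : z * h = g * z
  comul_g : Coalgebra.comul (R := k) g = g ⊗ₜ[k] g
  comul_h : Coalgebra.comul (R := k) h = h ⊗ₜ[k] h
  comul_z : Coalgebra.comul (R := k) z
    = (2 : k)⁻¹ • (z ⊗ₜ[k] z + (g * z) ⊗ₜ[k] z + z ⊗ₜ[k] (h * z) - (g * z) ⊗ₜ[k] (h * z))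
  counit_g : Coalgebra.counit (R := k) g = 1
  counit_h : Coalgebra.counit (R := k) h = 1
  counit_z : Coalgebra.counit (R := k) z = 1
  antipode_g : HopfAlgebra.antipode (R := k) g = g
  antipode_h : HopfAlgebra.antipode (R := k) h = h
  antipode_z : HopfAlgebra.antipode (R := k) z = z

/-- The element `z³ = (1/2)(z + gz + hz - ghz)` of the Kac–Paljutkin algebra. -/
def zCubed (k : Type) {H : Type} [Field k] [Ring H] [HopfAlgebra k H] (g h z : H) : H :=
  (2 : k)⁻¹ • (z + g * z + h * z - g * h * z)

end
noncomputable section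

variable (k H : Type) [Field k] [Ring H] [HopfAlgebra k H]

/-- The linear form returning the sum of the coordinates on `1, g, h, gh`. -/
def grpCoeff (b : Module.Basis (Fin 8) k H) : H →ₗ[k] k :=
  b.coord 0 + b.coord 1 + b.coord 2 + b.coord 3

/-- The linear form returning the sum of the coordinates on `z, gz, hz, ghz`. -/
def zptCoeff (b : Module.Basis (Fin 8) k H) : H →ₗ[k] k :=
  b.coord 4 + b.coord 5 + b.coord 6 + b.coord 7

/-- The left action `x ⇀ y` which is `y` for `x ∈ {1, g, h, gh}` and `φ(y)` for
`x ∈ {z, gz, hz, ghz}`, extended bilinearly. -/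
def caseLeftAction (b : Module.Basis (Fin 8) k H) (φ : H →ₗ[k] H) : H ⊗[k] H →ₗ[k] H :=
  (TensorProduct.lid k H).toLinearMap ∘ₗ
      TensorProduct.map (grpCoeff k H b) LinearMap.id
    + (TensorProduct.lid k H).toLinearMap ∘ₗ TensorProduct.map (zptCoeff k H b) φ

/-- The right action `y ↼ x` which is `y` for `x ∈ {1, g, h, gh}` and `φ(y)` for
`x ∈ {z, gz, hz, ghz}`, extended bilinearly. -/
def caseRightAction (b : Module.Basis (Fin 8) k H) (φ : H →ₗ[k] H) : H ⊗[k] H →ₗ[k] H :=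
  caseLeftAction k H b φ ∘ₗ (TensorProduct.comm k H H).toLinearMap

/-- The map `φ` of Case 2.1: `φ(1) = 1`, `φ(g) = h`, `φ(h) = g`, `φ(gh) = gh`,
`φ(z) = z³`, `φ(gz) = hz³`, `φ(hz) = gz³`, `φ(ghz) = ghz³`. -/
def case21Map (g h z : H) (b : Module.Basis (Fin 8) k H) : H →ₗ[k] H :=
  b.constr k ![1, h, g, g * h, zCubed k g h z,
    h * zCubed k g h z, g * zCubed k g h z, g * h * zCubed k g h z]

/-- The map `ψ` of Case 2.2: `ψ(1) = 1`, `ψ(g) = h`, `ψ(h) = g`, `ψ(gh) = gh`,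
`ψ(z) = ghz³`, `ψ(gz) = gz³`, `ψ(hz) = hz³`, `ψ(ghz) = z³`. -/
def case22Map (g h z : H) (b : Module.Basis (Fin 8) k H) : H →ₗ[k] H :=
  b.constr k ![1, h, g, g * h, g * h * zCubed k g h z,
    g * zCubed k g h z, h * zCubed k g h z, zCubed k g h z]

end

/-!
The actions only see whether the acting element lies in the group part `G = span {1, g, h, gh}`
or in the `z`-part `Z = span {z, gz, hz, ghz}`, and the coproduct of each basis vector has both
legs in the part of that vector. Hence `r (x ⊗ y) = T_x y ⊗ T_y x` for `x, y ∈ G ∪ Z`, where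
`T_u` is the identity for `u ∈ G` and `φ` for `u ∈ Z`. As `φ` preserves `G` and `Z` and `φ² = 1`,
`r (r (x ⊗ y)) = T_y (T_y x) ⊗ T_x (T_x y) = x ⊗ y`.
-/

section Contraction

variable {R A : Type*} [CommSemiring R] [AddCommMonoid A] [Module R A] [CoalgebraStruct R A]

noncomputable def leftContraction (χ : A →ₗ[R] R) : A →ₗ[R] A :=
  (TensorProduct.lid R A).toLinearMap ∘ₗ χ.rTensor A ∘ₗ Coalgebra.comul

noncomputable def rightContraction (χ : A →ₗ[R] R) : A →ₗ[R] A :=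
  (TensorProduct.rid R A).toLinearMap ∘ₗ χ.lTensor A ∘ₗ Coalgebra.comul

end Contraction

section TwistedFlip

variable {R V : Type*} [CommRing R] [AddCommGroup V] [Module R V]

/-- With `G = range e`, `Z = ker e`, this is `x ⊗ y ↦ T_x y ⊗ T_y x` for `x, y ∈ G ∪ Z`, where
`T_u = 1` for `u ∈ G` and `T_u = φ` for `u ∈ Z`. -/
noncomputable def twistedFlip (e φ : Module.End R V) : V ⊗[R] V →ₗ[R] V ⊗[R] V :=
  TensorProduct.comm R V V ∘ₗ
    (map e e + map (φ * e) (1 - e) + map (1 - e) (φ * e) + map (φ * (1 - e)) (φ * (1 - e)))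

theorem twistedFlip_comp_self {e φ : Module.End R V} (he : IsIdempotentElem e)
    (hφe : Commute φ e) (hφ : φ * φ = 1) :
    twistedFlip e φ ∘ₗ twistedFlip e φ = LinearMap.id := by
  have he_apply (v : V) : e (e v) = e v := LinearMap.congr_fun he v
  have hφe_apply (v : V) : φ (e v) = e (φ v) := LinearMap.congr_fun hφe v
  have hφ_apply (v : V) : φ (φ v) = v := LinearMap.congr_fun hφ v
  ext x y
  simp [twistedFlip, he_apply, hφe_apply, hφ_apply, tmul_sub, sub_tmul]

end TwistedFlip

section CaseActions

variable {k H : Type} [Field k] [Ring H] [HopfAlgebra k H]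

theorem ybOp_caseLeftAction_caseRightAction (b : Module.Basis (Fin 8) k H) (φ : H →ₗ[k] H) :
    ybOp k H (caseLeftAction k H b φ) (caseRightAction k H b φ) =
      TensorProduct.comm k H H ∘ₗ
        (map (leftContraction (grpCoeff k H b)) (rightContraction (grpCoeff k H b)) +
          map (φ ∘ₗ leftContraction (grpCoeff k H b)) (rightContraction (zptCoeff k H b)) +
          map (leftContraction (zptCoeff k H b)) (φ ∘ₗ rightContraction (grpCoeff k H b)) +
          map (φ ∘ₗ leftContraction (zptCoeff k H b)) (φ ∘ₗ rightContraction (zptCoeff k H b))) := by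
  set p := grpCoeff k H b
  set q := zptCoeff k H b
  have key : map (caseLeftAction k H b φ) (caseRightAction k H b φ) ∘ₗ
        (tensorTensorTensorComm k H H H H).toLinearMap =
      TensorProduct.comm k H H ∘ₗ
        (map ((TensorProduct.lid k H).toLinearMap ∘ₗ p.rTensor H)
            ((TensorProduct.rid k H).toLinearMap ∘ₗ p.lTensor H) +
          map (φ ∘ₗ (TensorProduct.lid k H).toLinearMap ∘ₗ p.rTensor H)
            ((TensorProduct.rid k H).toLinearMap ∘ₗ q.lTensor H) +
          map ((TensorProduct.lid k H).toLinearMap ∘ₗ q.rTensor H)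
            (φ ∘ₗ (TensorProduct.rid k H).toLinearMap ∘ₗ p.lTensor H) +
          map (φ ∘ₗ (TensorProduct.lid k H).toLinearMap ∘ₗ q.rTensor H)
            (φ ∘ₗ (TensorProduct.rid k H).toLinearMap ∘ₗ q.lTensor H)) := by
    ext x₁ x₂ y₁ y₂
    simp [caseLeftAction, caseRightAction, p, q, tmul_add, add_tmul, smul_tmul']
    abel
  ext x y
  simpa [ybOp, sweedler2, leftContraction, rightContraction] using
    LinearMap.congr_fun key (Coalgebra.comul x ⊗ₜ Coalgebra.comul y)

end CaseActions

section Basis8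

variable {k H : Type} [Field k] [Ring H] [HopfAlgebra k H] (b : Module.Basis (Fin 8) k H)

theorem grpCoeff_basis (i : Fin 8) : grpCoeff k H b (b i) = if i < 4 then 1 else 0 := by
  fin_cases i <;> simp [grpCoeff, Module.Basis.coord_apply]

theorem zptCoeff_basis (i : Fin 8) : zptCoeff k H b (b i) = if i < 4 then 0 else 1 := by
  fin_cases i <;> simp [zptCoeff, Module.Basis.coord_apply]

theorem grpCoeff_basis_eq_of_four_le {i : Fin 8} (hi : 4 ≤ i) :
    grpCoeff k H b (b i) = grpCoeff k H b (b 4) := by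
  simp [grpCoeff_basis, not_lt.mpr hi]

theorem zptCoeff_basis_eq_of_four_le {i : Fin 8} (hi : 4 ≤ i) :
    zptCoeff k H b (b i) = zptCoeff k H b (b 4) := by
  simp [zptCoeff_basis, not_lt.mpr hi]

end Basis8

namespace IsKacPaljutkin

variable {k H : Type} [Field k] [Ring H] [HopfAlgebra k H] {g h z : H}
  {b : Module.Basis (Fin 8) k H}

theorem g_mul_g_mul (hKP : IsKacPaljutkin k H g h z b) (x : H) : g * (g * x) = x := by
  rw [← mul_assoc, hKP.g_sq, one_mul]

theorem h_mul_h_mul (hKP : IsKacPaljutkin k H g h z b) (x : H) : h * (h * x) = x := by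
  rw [← mul_assoc, hKP.h_sq, one_mul]

theorem h_mul_g_mul (hKP : IsKacPaljutkin k H g h z b) (x : H) : h * (g * x) = g * (h * x) := by
  rw [← mul_assoc, ← hKP.gh_comm, mul_assoc]

theorem comul_basis (hKP : IsKacPaljutkin k H g h z b) (i : Fin 8) :
    Coalgebra.comul (R := k) (b i) =
      ![b 0 ⊗ₜ b 0, b 1 ⊗ₜ b 1, b 2 ⊗ₜ b 2, b 3 ⊗ₜ b 3,
        (2 : k)⁻¹ • (b 4 ⊗ₜ b 4 + b 5 ⊗ₜ b 4 + b 4 ⊗ₜ b 6 - b 5 ⊗ₜ b 6),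
        (2 : k)⁻¹ • (b 5 ⊗ₜ b 5 + b 4 ⊗ₜ b 5 + b 5 ⊗ₜ b 7 - b 4 ⊗ₜ b 7),
        (2 : k)⁻¹ • (b 6 ⊗ₜ b 6 + b 7 ⊗ₜ b 6 + b 6 ⊗ₜ b 4 - b 7 ⊗ₜ b 4),
        (2 : k)⁻¹ • (b 7 ⊗ₜ b 7 + b 6 ⊗ₜ b 7 + b 7 ⊗ₜ b 5 - b 6 ⊗ₜ b 5)] i := by
  fin_cases i <;>
    simp [hKP.basis_eq, Bialgebra.comul_mul, hKP.comul_g, hKP.comul_h, hKP.comul_z,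
      Algebra.TensorProduct.one_def, mul_add, mul_sub, mul_assoc,
      hKP.g_mul_g_mul, hKP.h_mul_h_mul, hKP.h_mul_g_mul]

theorem case21Map_basis (hKP : IsKacPaljutkin k H g h z b) (i : Fin 8) :
    case21Map k H g h z b (b i) =
      ![b 0, b 2, b 1, b 3,
        (2 : k)⁻¹ • (b 4 + b 5 + b 6 - b 7), (2 : k)⁻¹ • (b 4 - b 5 + b 6 + b 7),
        (2 : k)⁻¹ • (b 4 + b 5 - b 6 + b 7), (2 : k)⁻¹ • (-b 4 + b 5 + b 6 + b 7)] i := by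
  rw [case21Map, Module.Basis.constr_basis]
  fin_cases i <;>
    simp [hKP.basis_eq, zCubed, mul_add, mul_sub, mul_assoc,
      hKP.g_mul_g_mul, hKP.h_mul_h_mul, hKP.h_mul_g_mul] <;> module

theorem case22Map_basis (hKP : IsKacPaljutkin k H g h z b) (i : Fin 8) :
    case22Map k H g h z b (b i) =
      ![b 0, b 2, b 1, b 3,
        (2 : k)⁻¹ • (-b 4 + b 5 + b 6 + b 7), (2 : k)⁻¹ • (b 4 + b 5 - b 6 + b 7),
        (2 : k)⁻¹ • (b 4 - b 5 + b 6 + b 7), (2 : k)⁻¹ • (b 4 + b 5 + b 6 - b 7)] i := by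
  rw [case22Map, Module.Basis.constr_basis]
  fin_cases i <;>
    simp [hKP.basis_eq, zCubed, mul_add, mul_sub, mul_assoc,
      hKP.g_mul_g_mul, hKP.h_mul_h_mul, hKP.h_mul_g_mul] <;> module

variable [NeZero (2 : k)]

theorem leftContraction_basis (hKP : IsKacPaljutkin k H g h z b)
    (χ : H →ₗ[k] k) (hχ : ∀ {i : Fin 8}, 4 ≤ i → χ (b i) = χ (b 4)) (i : Fin 8) :
    leftContraction χ (b i) = χ (b i) • b i := by
  have h5 := hχ (i := 5) (by decide)
  have h6 := hχ (i := 6) (by decide)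
  have h7 := hχ (i := 7) (by decide)
  fin_cases i <;>
    simp [leftContraction, hKP.comul_basis, h5, h6, h7] <;> match_scalars <;> field_simp <;> ring

theorem rightContraction_basis (hKP : IsKacPaljutkin k H g h z b)
    (χ : H →ₗ[k] k) (hχ : ∀ {i : Fin 8}, 4 ≤ i → χ (b i) = χ (b 4)) (i : Fin 8) :
    rightContraction χ (b i) = χ (b i) • b i := by
  have h5 := hχ (i := 5) (by decide)
  have h6 := hχ (i := 6) (by decide)
  have h7 := hχ (i := 7) (by decide)
  fin_cases i <;>
    simp [rightContraction, hKP.comul_basis, h5, h6, h7] <;> match_scalars <;> field_simp <;> ring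

theorem leftContraction_grpCoeff_basis (hKP : IsKacPaljutkin k H g h z b) (i : Fin 8) :
    leftContraction (grpCoeff k H b) (b i) = if i < 4 then b i else 0 := by
  rw [hKP.leftContraction_basis _ (grpCoeff_basis_eq_of_four_le b), grpCoeff_basis]
  split_ifs <;> simp

theorem rightContraction_grpCoeff (hKP : IsKacPaljutkin k H g h z b) :
    rightContraction (grpCoeff k H b) = leftContraction (grpCoeff k H b) :=
  b.ext fun i => by
    rw [hKP.rightContraction_basis _ (grpCoeff_basis_eq_of_four_le b),
      hKP.leftContraction_basis _ (grpCoeff_basis_eq_of_four_le b)]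

theorem leftContraction_zptCoeff (hKP : IsKacPaljutkin k H g h z b) :
    leftContraction (zptCoeff k H b) = 1 - leftContraction (grpCoeff k H b) :=
  b.ext fun i => by
    rw [hKP.leftContraction_basis _ (zptCoeff_basis_eq_of_four_le b), LinearMap.sub_apply,
      hKP.leftContraction_grpCoeff_basis, zptCoeff_basis]
    split_ifs <;> simp

theorem rightContraction_zptCoeff (hKP : IsKacPaljutkin k H g h z b) :
    rightContraction (zptCoeff k H b) = 1 - leftContraction (grpCoeff k H b) := by
  rw [← hKP.leftContraction_zptCoeff]
  exact b.ext fun i => by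
    rw [hKP.rightContraction_basis _ (zptCoeff_basis_eq_of_four_le b),
      hKP.leftContraction_basis _ (zptCoeff_basis_eq_of_four_le b)]

theorem isIdempotentElem_leftContraction_grpCoeff (hKP : IsKacPaljutkin k H g h z b) :
    IsIdempotentElem (leftContraction (grpCoeff k H b)) :=
  b.ext fun i => by
    rw [Module.End.mul_apply, hKP.leftContraction_grpCoeff_basis]
    split_ifs <;> simp [hKP.leftContraction_grpCoeff_basis, *]

theorem ybOp_caseActions_eq_twistedFlip (hKP : IsKacPaljutkin k H g h z b) (φ : H →ₗ[k] H) :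
    ybOp k H (caseLeftAction k H b φ) (caseRightAction k H b φ) =
      twistedFlip (leftContraction (grpCoeff k H b)) φ := by
  rw [ybOp_caseLeftAction_caseRightAction, hKP.rightContraction_grpCoeff,
    hKP.leftContraction_zptCoeff, hKP.rightContraction_zptCoeff]
  rfl

theorem commute_case21Map (hKP : IsKacPaljutkin k H g h z b) :
    Commute (case21Map k H g h z b) (leftContraction (grpCoeff k H b)) :=
  b.ext fun i => by
    fin_cases i <;> simp [hKP.case21Map_basis, hKP.leftContraction_grpCoeff_basis]

theorem case21Map_mul_self (hKP : IsKacPaljutkin k H g h z b) :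
    case21Map k H g h z b * case21Map k H g h z b = 1 :=
  b.ext fun i => by
    fin_cases i <;> simp [hKP.case21Map_basis] <;> match_scalars <;> field_simp <;> ring

theorem commute_case22Map (hKP : IsKacPaljutkin k H g h z b) :
    Commute (case22Map k H g h z b) (leftContraction (grpCoeff k H b)) :=
  b.ext fun i => by
    fin_cases i <;> simp [hKP.case22Map_basis, hKP.leftContraction_grpCoeff_basis]

theorem case22Map_mul_self (hKP : IsKacPaljutkin k H g h z b) :
    case22Map k H g h z b * case22Map k H g h z b = 1 :=
  b.ext fun i => by
    fin_cases i <;> simp [hKP.case22Map_basis] <;> match_scalars <;> field_simp <;> ring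

end IsKacPaljutkin

theorem case21_case22_ybOp_involutive_general {k H : Type} [Field k] [CharZero k]
    [Ring H] [HopfAlgebra k H] (g h z : H) (b : Module.Basis (Fin 8) k H)
    (hKP : IsKacPaljutkin k H g h z b) :
    (ybOp k H (caseLeftAction k H b (case21Map k H g h z b))
        (caseRightAction k H b (case21Map k H g h z b)) ∘ₗ
      ybOp k H (caseLeftAction k H b (case21Map k H g h z b))
        (caseRightAction k H b (case21Map k H g h z b)) = LinearMap.id) ∧
    (ybOp k H (caseLeftAction k H b (case22Map k H g h z b))
        (caseRightAction k H b (case22Map k H g h z b)) ∘ₗ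
      ybOp k H (caseLeftAction k H b (case22Map k H g h z b))
        (caseRightAction k H b (case22Map k H g h z b)) = LinearMap.id) := by
  simp only [hKP.ybOp_caseActions_eq_twistedFlip]
  have he := hKP.isIdempotentElem_leftContraction_grpCoeff
  exact ⟨twistedFlip_comp_self he hKP.commute_case21Map hKP.case21Map_mul_self,
    twistedFlip_comp_self he hKP.commute_case22Map hKP.case22Map_mul_self⟩

/-- The Yang–Baxter operators associated to the Case 2.1 and Case 2.2 matched pairs of
actions on the Kac–Paljutkin algebra `H₈` are involutive. -/
theorem case21_case22_ybOp_involutive {k H : Type} [Field k] [CharZero k] [IsAlgClosed k]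
    [Ring H] [HopfAlgebra k H] (g h z : H) (b : Module.Basis (Fin 8) k H)
    (hKP : IsKacPaljutkin k H g h z b) :
    (ybOp k H (caseLeftAction k H b (case21Map k H g h z b))
        (caseRightAction k H b (case21Map k H g h z b)) ∘ₗ
      ybOp k H (caseLeftAction k H b (case21Map k H g h z b))
        (caseRightAction k H b (case21Map k H g h z b)) = LinearMap.id) ∧
    (ybOp k H (caseLeftAction k H b (case22Map k H g h z b))
        (caseRightAction k H b (case22Map k H g h z b)) ∘ₗ
      ybOp k H (caseLeftAction k H b (case22Map k H g h z b))
        (caseRightAction k H b (case22Map k H g h z b)) = LinearMap.id) :=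
  case21_case22_ybOp_involutive_general g h z b hKP
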